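/- There exist fields ℚ ⊆ K ⊆ L ⊆ \overline{ℚ} such that K/ℚ is an infinite algebraic extension, K does not satisfy the Bogomolov property (B), the extension L/K is finite with [L:K] > 1, and L/K is not Bogomolov. -/

import Mathlib

open NumberField IntermediateField
open scoped Classical

noncomputable section

namespace RelBogomolov

/-- The "denominator ideal" of an element `x` of a field `K`: the ideal of integers `a` of `K`
such that `a * x` is an algebraic integer.  For a number field `K`, the logarithm of its absolute
norm is the finite (non-archimedean) part `∑_{v finite} log max (1, |x|_v)` of the Weil height. -/
def denomIdeal (K : Type*) [Field K] (x : K) : Ideal (𝓞 K) where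
  carrier := {a | IsIntegral ℤ ((a : K) * x)}
  add_mem' := by
    intro a b ha hb
    have := ha.add hb
    simpa [add_mul] using this
  zero_mem' := by
    simpa using isIntegral_zero
  smul_mem' := by
    intro c a ha
    have hc : IsIntegral ℤ (c : K) := RingOfIntegers.isIntegral_coe c
    simpa [smul_eq_mul, mul_assoc] using hc.mul ha

/-- The absolute logarithmic Weil height of an element of a number field `K`:
`h(x) = (1/[K:ℚ]) (∑_{v archimedean} [K_v : ℚ_v] log max (1, |x|_v)
          + ∑_{v finite} [K_v : ℚ_v] log max (1, |x|_v))`,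
where the finite part is expressed as the log of the absolute norm of the denominator ideal. -/
def nfHeight (K : Type*) [Field K] [NumberField K] (x : K) : ℝ :=
  (Module.finrank ℚ K : ℝ)⁻¹ *
    ((∑ w : InfinitePlace K, (w.mult : ℝ) * Real.log (max 1 (w x))) +
      Real.log (Ideal.absNorm (denomIdeal K x)))

/-- The absolute logarithmic Weil height of a complex number that is algebraic over `ℚ`,
computed in the number field `ℚ(x)` (junk value `0` for transcendental numbers). -/
def algHeight (x : ℂ) : ℝ :=
  if hx : IsIntegral ℚ x then
    letI : FiniteDimensional ℚ ℚ⟮x⟯ := adjoin.finiteDimensional hx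
    haveI : CharZero ℚ⟮x⟯ := charZero_of_injective_algebraMap (algebraMap ℚ ℚ⟮x⟯).injective
    haveI : NumberField ℚ⟮x⟯ := ⟨⟩
    nfHeight ℚ⟮x⟯ (AdjoinSimple.gen ℚ x)
  else 0

/-- The multiplicative Weil height `H(x) = exp h(x)`. -/
def mulHeight (x : ℂ) : ℝ := Real.exp (algHeight x)

/-- A fixed algebraic closure of `ℚ`: the field of algebraic numbers inside `ℂ`. -/
def Qbar : IntermediateField ℚ ℂ := _root_.algebraicClosure ℚ ℂ

/-- A subfield `K` of `ℚ̄` has the Bogomolov property (B) if there is `ε > 0` such that no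
nonzero element of `K` has height strictly between `0` and `ε`. -/
def HasBogomolovProperty (K : IntermediateField ℚ ℂ) : Prop :=
  ∃ ε : ℝ, 0 < ε ∧ ∀ x : ℂ, x ∈ K → x ≠ 0 → ¬(0 < algHeight x ∧ algHeight x < ε)

/-- The extension `L/K` is Bogomolov if there is `ε > 0` such that every nonzero `x ∈ L`
with `0 < h(x) < ε` lies in `K`. -/
def IsBogomolovExtension (K L : IntermediateField ℚ ℂ) : Prop :=
  ∃ ε : ℝ, 0 < ε ∧ ∀ x : ℂ, x ∈ L → x ≠ 0 → 0 < algHeight x → algHeight x < ε → x ∈ K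

/-- `δ(M)`: the number of archimedean places of `M` (junk value `0` in the infinite case). -/
def archPlaces (M : IntermediateField ℚ ℂ) : ℕ :=
  if h : FiniteDimensional ℚ ↥M then
    letI := h
    haveI : CharZero ↥M := charZero_of_injective_algebraMap (algebraMap ℚ ↥M).injective
    haveI : NumberField ↥M := ⟨⟩
    Fintype.card (InfinitePlace ↥M)
  else 0

/-- The absolute norm `N_{F/ℚ}` of an ideal of the ring of integers of a subfield `F ⊆ ℚ̄`
(junk value `0` in the infinite case). -/
def idealNorm {F : IntermediateField ℚ ℂ} (I : Ideal (𝓞 ↥F)) : ℕ :=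
  if h : FiniteDimensional ℚ ↥F then
    letI := h
    haveI : CharZero ↥F := charZero_of_injective_algebraMap (algebraMap ℚ ↥F).injective
    haveI : NumberField ↥F := ⟨⟩
    Ideal.absNorm I
  else 0

/-- The relative discriminant ideal `D_{F'/F}` of an extension of number fields, defined as
the ideal of `𝓞 F` generated by the discriminants of all `[F':F]`-tuples of integers of `F'`. -/
def relDiscrNF (F F' : Type*) [Field F] [Field F'] [Algebra F F'] : Ideal (𝓞 F) :=
  Ideal.span {d : 𝓞 F | ∃ x : Fin (Module.finrank F F') → 𝓞 F', d = Algebra.discr (𝓞 F) x}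

/-- The relative discriminant ideal `D_{C/F}` for subfields `F ≤ C` of `ℚ̄`
(junk value `⊥` if `F ≰ C`). -/
def relDiscr (F C : IntermediateField ℚ ℂ) : Ideal (𝓞 ↥F) :=
  if h : F ≤ C then
    letI : Algebra ↥F ↥C := (IntermediateField.inclusion h).toAlgebra
    relDiscrNF ↥F ↥C
  else ⊥

/-- The inclusion `𝓞 F →+* 𝓞 M` of rings of integers induced by an inclusion `F ≤ M` of
subfields of `ℚ̄`. -/
def intInclusion {F M : IntermediateField ℚ ℂ} (h : F ≤ M) : 𝓞 ↥F →+* 𝓞 ↥M :=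
  RingOfIntegers.mapRingHom (IntermediateField.inclusion h)

/-- `ρ(K/F)`: the least real number `ρ` such that every finite subextension `M` of `K/F` is
contained in a finite subextension `M'` of `K/F` with `δ(M')/[M':F] ≤ ρ`. -/
def rho (F K : IntermediateField ℚ ℂ) : ℝ :=
  sInf {r : ℝ | ∀ M : IntermediateField ℚ ℂ, F ≤ M → M ≤ K → FiniteDimensional ℚ ↥M →
    ∃ M' : IntermediateField ℚ ℂ, M ≤ M' ∧ M' ≤ K ∧ FiniteDimensional ℚ ↥M' ∧
      (archPlaces M' : ℝ) / (relfinrank F M' : ℝ) ≤ r}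

/-- The norm excess discriminant `E(K, C/F)`: the infimum over finite subextensions `M` of
`K/F` (with `e = [M:F]`, `s = [C:F]`) of
`N_{F/ℚ}(D_{C/F}^e / gcd(D_{C/F}^e, D_{M/F}^s))^{1/e}`; here the gcd of two ideals is their
sup, and the norm of the quotient ideal is the quotient of the norms. -/
def normExcess (K F C : IntermediateField ℚ ℂ) : ℝ :=
  sInf {r : ℝ | ∃ M : IntermediateField ℚ ℂ, F ≤ M ∧ M ≤ K ∧ FiniteDimensional ℚ ↥M ∧
    r = ((idealNorm ((relDiscr F C) ^ (relfinrank F M)) : ℝ) /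
          (idealNorm ((relDiscr F C) ^ (relfinrank F M) ⊔ (relDiscr F M) ^ (relfinrank F C)) : ℝ))
        ^ ((relfinrank F M : ℝ)⁻¹)}

/-- `a(𝔭)`: the greatest `k` such that `x^ℓ ≡ α (mod 𝔭^k)` has a solution `x ∈ 𝓞 F`. -/
def aExp (F : Type*) [Field F] (ℓ : ℕ) (α : 𝓞 F) (𝔭 : Ideal (𝓞 F)) : ℕ :=
  sSup {k : ℕ | ∃ x : 𝓞 F, x ^ ℓ - α ∈ 𝔭 ^ k}

end RelBogomolov

open RelBogomolov

/-!
The field `K = ℚ(2^{1/2}, 2^{1/4}, 2^{1/8}, …)` is real, and contains `2^{1/2^n}`, an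
algebraic integer all of whose conjugates have absolute value `2^{1/2^n}`, hence of height
`log 2 / 2^n → 0`; it is infinite over `ℚ` because `X^{2^n} - 2` is Eisenstein at `2`.
In `L = K(i)` the elements `i·2^{1/2^n}` (`n ≥ 2`) also satisfy `x^{2^n} = 2`, so they have
the same small heights, but they are not real and so do not lie in `K`.
-/

open Polynomial Filter Topology

namespace RelBogomolov

theorem denomIdeal_eq_top_of_isIntegral {K : Type*} [Field K] {x : K} (hx : IsIntegral ℤ x) :
    denomIdeal K x = ⊤ :=
  (Ideal.eq_top_iff_one _).mpr (by simpa [denomIdeal] using hx)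

theorem log_max_one_eq_log_div_of_pow_eq {x : ℝ} {m a : ℕ} (hm : m ≠ 0) (hx : 0 ≤ x)
    (hxa : x ^ m = a) : Real.log (max 1 x) = Real.log a / m := by
  rcases Nat.eq_zero_or_pos a with rfl | ha
  · rw [Nat.cast_zero, pow_eq_zero_iff hm] at hxa
    simp [hxa]
  · have h1 : 1 ≤ x := (one_le_pow_iff_of_nonneg hx hm).mp (by rw [hxa]; exact_mod_cast ha)
    rw [max_eq_right h1, eq_div_iff (by exact_mod_cast hm), mul_comm, ← Real.log_pow, hxa]

theorem isIntegral_of_pow_eq_natCast {R : Type*} [CommRing R] {x : R} {m a : ℕ} (hm : m ≠ 0)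
    (hxa : x ^ m = a) : IsIntegral ℤ x :=
  IsIntegral.of_pow (Nat.pos_of_ne_zero hm) (hxa ▸ isIntegral_natCast a)

/-- `x` is integral, and all its archimedean absolute values equal `a^{1/m}`. -/
theorem nfHeight_of_pow_eq_natCast {K : Type*} [Field K] [NumberField K] {x : K} {m a : ℕ}
    (hm : m ≠ 0) (hxa : x ^ m = a) : nfHeight K x = Real.log a / m := by
  have hw (w : InfinitePlace K) : Real.log (max 1 (w x)) = Real.log a / m := by
    refine log_max_one_eq_log_div_of_pow_eq hm (apply_nonneg w x) ?_
    rw [← map_pow, hxa, ← InfinitePlace.norm_embedding_eq, map_natCast, Complex.norm_natCast]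
  have hK : (Module.finrank ℚ K : ℝ) ≠ 0 := by exact_mod_cast Module.finrank_pos.ne'
  rw [nfHeight, denomIdeal_eq_top_of_isIntegral (isIntegral_of_pow_eq_natCast hm hxa),
    Ideal.absNorm_top, Nat.cast_one, Real.log_one, add_zero, Finset.sum_congr rfl fun w _ => by
      rw [hw w], ← Finset.sum_mul, ← Nat.cast_sum, InfinitePlace.sum_mult_eq]
  field_simp

theorem algHeight_of_pow_eq_natCast {x : ℂ} {m a : ℕ} (hm : m ≠ 0) (hxa : x ^ m = a) :
    algHeight x = Real.log a / m := by
  have hx : IsIntegral ℚ x := (isIntegral_of_pow_eq_natCast hm hxa).tower_top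
  rw [algHeight, dif_pos hx]
  have : FiniteDimensional ℚ ℚ⟮x⟯ := adjoin.finiteDimensional hx
  have : NumberField ℚ⟮x⟯ := ⟨⟩
  apply nfHeight_of_pow_eq_natCast hm
  apply (algebraMap ℚ⟮x⟯ ℂ).injective
  rw [map_pow, AdjoinSimple.algebraMap_gen, hxa, map_natCast]

theorem not_hasBogomolovProperty_of_tendsto {K : IntermediateField ℚ ℂ} {x : ℕ → ℂ}
    (hxK : ∀ n, x n ∈ K) (hx0 : ∀ n, x n ≠ 0) (hpos : ∀ n, 0 < algHeight (x n))
    (hlim : Tendsto (fun n => algHeight (x n)) atTop (𝓝 0)) : ¬ HasBogomolovProperty K := by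
  rintro ⟨ε, hε, H⟩
  obtain ⟨n, hn⟩ := (hlim.eventually (gt_mem_nhds hε)).exists
  exact H (x n) (hxK n) (hx0 n) ⟨hpos n, hn⟩

theorem not_isBogomolovExtension_of_tendsto {K L : IntermediateField ℚ ℂ} {x : ℕ → ℂ}
    (hxL : ∀ n, x n ∈ L) (hxK : ∀ n, x n ∉ K) (hx0 : ∀ n, x n ≠ 0)
    (hpos : ∀ n, 0 < algHeight (x n))
    (hlim : Tendsto (fun n => algHeight (x n)) atTop (𝓝 0)) : ¬ IsBogomolovExtension K L := by
  rintro ⟨ε, hε, H⟩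
  obtain ⟨n, hn⟩ := (hlim.eventually (gt_mem_nhds hε)).exists
  exact hxK n (H (x n) (hxL n) (hx0 n) (hpos n) hn)

theorem adjoin_simple_le_Qbar {x : ℂ} (hx : IsIntegral ℚ x) : ℚ⟮x⟯ ≤ Qbar :=
  adjoin_simple_le_iff.mpr (mem_algebraicClosure_iff'.mpr hx)

section AdjoinSimple

variable {F E : Type*} [Field F] [Field E] [Algebra F E] (K : IntermediateField F E) {α : E}

theorem extendScalars_le_sup_adjoin_simple :
    extendScalars (le_sup_left : K ≤ K ⊔ F⟮α⟯) = K⟮α⟯ :=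
  restrictScalars_injective F <| by
    rw [extendScalars_restrictScalars, restrictScalars_adjoin_eq_sup]

theorem finiteDimensional_extendScalars_sup_adjoin_simple (hα : IsIntegral F α) :
    FiniteDimensional K (extendScalars (le_sup_left : K ≤ K ⊔ F⟮α⟯)) := by
  rw [extendScalars_le_sup_adjoin_simple]
  exact adjoin.finiteDimensional hα.tower_top

theorem one_lt_relfinrank_sup_adjoin_simple (hα : IsIntegral F α) (hαK : α ∉ K) :
    1 < relfinrank K (K ⊔ F⟮α⟯) := by
  have := finiteDimensional_extendScalars_sup_adjoin_simple K hα
  have hpos : 0 < relfinrank K (K ⊔ F⟮α⟯) := by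
    rw [relfinrank_eq_finrank_of_le le_sup_left]
    exact Module.finrank_pos
  have hne : relfinrank K (K ⊔ F⟮α⟯) ≠ 1 := fun h =>
    hαK (relfinrank_eq_one_iff.mp h (le_sup_right (a := K) (mem_adjoin_simple_self F α)))
  omega

end AdjoinSimple

theorem irreducible_X_pow_sub_C_natCast_prime {p k : ℕ} (hp : p.Prime) (hk : k ≠ 0) :
    Irreducible (X ^ k - C (p : ℚ)) := by
  have hmonic : (X ^ k - C (p : ℤ)).Monic := monic_X_pow_sub_C _ hk
  have hdeg : (X ^ k - C (p : ℤ)).degree = (k : WithBot ℕ) :=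
    degree_X_pow_sub_C (Nat.pos_of_ne_zero hk) _
  have hp' : ¬ (p : ℤ) ∣ 1 := by exact_mod_cast hp.not_dvd_one
  have hZ : Irreducible (X ^ k - C (p : ℤ)) := by
    have hP : (Ideal.span {(p : ℤ)}).IsPrime :=
      (Ideal.span_singleton_prime (by exact_mod_cast hp.ne_zero)).mpr
        (Nat.prime_iff_prime_int.mp hp)
    refine irreducible_of_eisenstein_criterion hP ?_ (fun n hn => ?_)
      (by rw [hdeg]; exact_mod_cast Nat.pos_of_ne_zero hk) ?_ hmonic.isPrimitive
    · rwa [hmonic.leadingCoeff, Ideal.mem_span_singleton]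
    · have hn : n < k := by exact_mod_cast hdeg ▸ hn
      rw [coeff_sub, coeff_X_pow, coeff_C, if_neg hn.ne, Ideal.mem_span_singleton]
      split_ifs <;> simp
    · rw [coeff_sub, coeff_X_pow, coeff_C, if_neg (Ne.symm hk), if_pos rfl,
        Ideal.span_singleton_pow, Ideal.mem_span_singleton, zero_sub, dvd_neg, sq]
      intro h
      exact hp' (Int.dvd_of_mul_dvd_mul_left (a := p) (by exact_mod_cast hp.ne_zero)
        (by simpa using h))
  simpa using (hmonic.irreducible_iff_irreducible_map_fraction_map (K := ℚ)).mp hZ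

theorem minpoly_eq_X_pow_sub_C_of_pow_eq_prime {E : Type*} [Field E] [Algebra ℚ E] {α : E}
    {p k : ℕ} (hp : p.Prime) (hk : k ≠ 0) (hα : α ^ k = p) :
    minpoly ℚ α = X ^ k - C (p : ℚ) :=
  (minpoly.eq_of_irreducible_of_monic (irreducible_X_pow_sub_C_natCast_prime hp hk)
    (by simp [hα]) (monic_X_pow_sub_C _ hk)).symm

theorem algHeight_of_pow_two_pow_eq_two {x : ℂ} {n : ℕ} (hx : x ^ 2 ^ n = 2) :
    algHeight x = Real.log 2 / 2 ^ n := by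
  rw [algHeight_of_pow_eq_natCast (a := 2) (pow_ne_zero n two_ne_zero) (by exact_mod_cast hx)]
  push_cast
  rfl

theorem tendsto_log_two_div_two_pow :
    Tendsto (fun n : ℕ => Real.log 2 / 2 ^ n) atTop (𝓝 0) :=
  tendsto_const_nhds.div_atTop (tendsto_pow_atTop_atTop_of_one_lt one_lt_two)

def rootTwo (n : ℕ) : ℝ := 2 ^ ((2 ^ n : ℕ) : ℝ)⁻¹

theorem rootTwo_pos (n : ℕ) : 0 < rootTwo n := by
  unfold rootTwo
  positivity

theorem rootTwo_pow (n : ℕ) : (rootTwo n : ℂ) ^ 2 ^ n = 2 := by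
  exact_mod_cast Real.rpow_inv_natCast_pow (x := 2) zero_le_two (pow_ne_zero n two_ne_zero)

def dyadicRootsOfTwo : IntermediateField ℚ ℂ := ⨆ n, ℚ⟮(rootTwo n : ℂ)⟯

theorem rootTwo_mem_dyadicRootsOfTwo (n : ℕ) : (rootTwo n : ℂ) ∈ dyadicRootsOfTwo :=
  le_iSup (fun n => ℚ⟮(rootTwo n : ℂ)⟯) n (mem_adjoin_simple_self ℚ _)

theorem im_eq_zero_of_mem_dyadicRootsOfTwo {x : ℂ} (hx : x ∈ dyadicRootsOfTwo) : x.im = 0 := by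
  have hle : dyadicRootsOfTwo ≤ (Complex.ofRealAm.restrictScalars ℚ).fieldRange :=
    iSup_le fun n => adjoin_simple_le_iff.mpr ⟨rootTwo n, rfl⟩
  obtain ⟨r, rfl⟩ := hle hx
  simp

theorem dyadicRootsOfTwo_le_Qbar : dyadicRootsOfTwo ≤ Qbar :=
  iSup_le fun n => adjoin_simple_le_Qbar
    (isIntegral_of_pow_eq_natCast (a := 2) (pow_ne_zero n two_ne_zero)
      (by exact_mod_cast rootTwo_pow n)).tower_top

theorem not_finiteDimensional_dyadicRootsOfTwo : ¬ FiniteDimensional ℚ dyadicRootsOfTwo := by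
  intro _
  set d := Module.finrank ℚ dyadicRootsOfTwo
  let α : dyadicRootsOfTwo := ⟨rootTwo d, rootTwo_mem_dyadicRootsOfTwo d⟩
  have hα : α ^ 2 ^ d = (2 : ℕ) := Subtype.ext (by push_cast; exact rootTwo_pow d)
  have hdeg := minpoly.natDegree_le (A := ℚ) α
  rw [minpoly_eq_X_pow_sub_C_of_pow_eq_prime Nat.prime_two (pow_ne_zero d two_ne_zero) hα,
    natDegree_X_pow_sub_C] at hdeg
  exact Nat.lt_two_pow_self.not_ge hdeg

theorem not_hasBogomolovProperty_dyadicRootsOfTwo : ¬ HasBogomolovProperty dyadicRootsOfTwo :=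
  not_hasBogomolovProperty_of_tendsto rootTwo_mem_dyadicRootsOfTwo
    (fun n => by exact_mod_cast (rootTwo_pos n).ne')
    (fun n => by rw [algHeight_of_pow_two_pow_eq_two (rootTwo_pow n)]; positivity)
    (tendsto_log_two_div_two_pow.congr fun n =>
      (algHeight_of_pow_two_pow_eq_two (rootTwo_pow n)).symm)

theorem not_isBogomolovExtension_dyadicRootsOfTwo_sup_I :
    ¬ IsBogomolovExtension dyadicRootsOfTwo (dyadicRootsOfTwo ⊔ ℚ⟮Complex.I⟯) := by
  -- `i ^ 2 ^ n = 1` only for `n ≥ 2`, hence the shift by two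
  have hpow (n : ℕ) : (Complex.I * rootTwo (n + 2)) ^ 2 ^ (n + 2) = 2 := by
    rw [mul_pow, rootTwo_pow, pow_add, pow_mul', show (2 : ℕ) ^ 2 = 4 by rfl,
      Complex.I_pow_four, one_pow, one_mul]
  refine not_isBogomolovExtension_of_tendsto (x := fun n => Complex.I * rootTwo (n + 2))
    (fun n => mul_mem (le_sup_right (a := dyadicRootsOfTwo) (mem_adjoin_simple_self ℚ _))
      (le_sup_left (b := ℚ⟮Complex.I⟯) (rootTwo_mem_dyadicRootsOfTwo _)))
    (fun n h => (rootTwo_pos (n + 2)).ne' (by simpa using im_eq_zero_of_mem_dyadicRootsOfTwo h))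
    (fun n => mul_ne_zero Complex.I_ne_zero (by exact_mod_cast (rootTwo_pos _).ne'))
    (fun n => by rw [algHeight_of_pow_two_pow_eq_two (hpow n)]; positivity)
    ((tendsto_log_two_div_two_pow.comp (tendsto_add_atTop_nat 2)).congr fun n =>
      (algHeight_of_pow_two_pow_eq_two (hpow n)).symm)

end RelBogomolov

/-- There exist `ℚ ⊆ K ⊆ L ⊆ ℚ̄` with `K/ℚ` infinite, `K` failing (B), and `L/K` a finite
extension of degree `> 1` which is not Bogomolov. -/
theorem exists_finite_not_bogomolovExtension :
    ∃ (K L : IntermediateField ℚ ℂ) (hKL : K ≤ L), L ≤ Qbar ∧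
      ¬ FiniteDimensional ℚ ↥K ∧ ¬ HasBogomolovProperty K ∧
      FiniteDimensional ↥K ↥(extendScalars hKL) ∧ 1 < relfinrank K L ∧
      ¬ IsBogomolovExtension K L := by
  have hI : IsIntegral ℚ Complex.I :=
    (isIntegral_of_pow_eq_natCast (a := 1) four_ne_zero (by simp)).tower_top
  have hI_notMem : Complex.I ∉ dyadicRootsOfTwo := fun h => by
    simpa using im_eq_zero_of_mem_dyadicRootsOfTwo h
  exact ⟨dyadicRootsOfTwo, dyadicRootsOfTwo ⊔ ℚ⟮Complex.I⟯, le_sup_left,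
    sup_le dyadicRootsOfTwo_le_Qbar (adjoin_simple_le_Qbar hI),
    not_finiteDimensional_dyadicRootsOfTwo, not_hasBogomolovProperty_dyadicRootsOfTwo,
    finiteDimensional_extendScalars_sup_adjoin_simple _ hI,
    one_lt_relfinrank_sup_adjoin_simple _ hI hI_notMem,
    not_isBogomolovExtension_dyadicRootsOfTwo_sup_I⟩
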